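/- arXiv:2507.14701 — 2 statements merged into one kernel-verified Lean document; each statement's English description precedes it below -/
import Mathlib

section
/- For every n ≥ 1, the map sending a column index i ∈ {1,…,n} to the number of cells of C_n in column i is a bijection from {1,…,n} onto {1,…,n}; likewise, the map sending a row index i ∈ {1,…,n} to the number of cells of C_n in row i is a bijection from {1,…,n} onto {1,…,n}. In particular, distinct rows contain distinct numbers of circled cells, and distinct columns contain distinct numbers of circled cells. -/
/-- The circled set `C n` of the `n × n` Pulsar puzzle, as a predicate on cells `(r, c)`
(1-indexed).  `C 1 = {(1,1)}`, and for `n ≥ 2`, a cell `(r,c)` of the grid is circled iff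
`r = 1`, or `r ≥ 2`, `c ≥ 2` and `(n - c + 1, r - 1)` is circled in `C (n-1)`. -/
def Circled : ℕ → ℕ × ℕ → Prop
  | 0, _ => False
  | 1, p => p = (1, 1)
  | (n + 2), (r, c) =>
      1 ≤ r ∧ r ≤ n + 2 ∧ 1 ≤ c ∧ c ≤ n + 2 ∧
        (r = 1 ∨ (2 ≤ r ∧ 2 ≤ c ∧ Circled (n + 1) (n + 2 - c + 1, r - 1)))

/-- `f` is a Latin square of order `n`: on the grid of cells `(r, c)` with `1 ≤ r, c ≤ n`
it takes values in `{1, …, n}`, with distinct values on distinct cells of any one row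
and on distinct cells of any one column. -/
def IsLatinSquare (n : ℕ) (f : ℕ × ℕ → ℕ) : Prop :=
  (∀ r c, 1 ≤ r → r ≤ n → 1 ≤ c → c ≤ n → 1 ≤ f (r, c) ∧ f (r, c) ≤ n) ∧
  (∀ r c₁ c₂, 1 ≤ r → r ≤ n → 1 ≤ c₁ → c₁ ≤ n → 1 ≤ c₂ → c₂ ≤ n → c₁ ≠ c₂ →
    f (r, c₁) ≠ f (r, c₂)) ∧
  (∀ r₁ r₂ c, 1 ≤ r₁ → r₁ ≤ n → 1 ≤ r₂ → r₂ ≤ n → 1 ≤ c → c ≤ n → r₁ ≠ r₂ →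
    f (r₁, c) ≠ f (r₂, c))

/-- `f` is a solution of the `n × n` Pulsar puzzle: a Latin square of order `n` such that
each circled entry equals the number of circled cells carrying that same value. -/
def IsPulsarSolution (n : ℕ) (f : ℕ × ℕ → ℕ) : Prop :=
  IsLatinSquare n f ∧
    ∀ p, Circled n p → f p = Set.ncard {q : ℕ × ℕ | Circled n q ∧ f q = f p}

lemma circled_bounds : ∀ {n r c : ℕ}, Circled n (r, c) → 1 ≤ r ∧ r ≤ n ∧ 1 ≤ c ∧ c ≤ n
  | 0, _, _, h => h.elim
  | 1, r, c, h => by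
      simp only [Circled, Prod.mk.injEq] at h
      omega
  | (m+2), r, c, h => ⟨h.1, h.2.1, h.2.2.1, h.2.2.2.1⟩

lemma circled_row_finite (n i : ℕ) : {c : ℕ | Circled n (i, c)}.Finite :=
  (Set.finite_Icc 1 n).subset fun c hc =>
    ⟨(circled_bounds hc).2.2.1, (circled_bounds hc).2.2.2⟩

noncomputable def colCount (n i : ℕ) : ℕ := Set.ncard {r : ℕ | Circled n (r, i)}
noncomputable def rowCount (n i : ℕ) : ℕ := Set.ncard {c : ℕ | Circled n (i, c)}

lemma ncard_Icc' (a b : ℕ) : (Set.Icc a b).ncard = b + 1 - a := by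
  rw [show (Set.Icc a b) = ↑(Finset.Icc a b) by simp, Set.ncard_coe_finset, Nat.card_Icc]

lemma row_first (m : ℕ) : rowCount (m+2) 1 = m+2 := by
  have h : {c : ℕ | Circled (m+2) (1, c)} = Set.Icc 1 (m+2) := by
    ext c
    constructor
    · rintro ⟨_, _, h1, h2, _⟩
      exact ⟨h1, h2⟩
    · rintro ⟨h1, h2⟩
      exact ⟨le_refl 1, by omega, h1, h2, Or.inl rfl⟩
  rw [rowCount, h, ncard_Icc']
  omega

lemma col_first (m : ℕ) : colCount (m+2) 1 = 1 := by
  have h : {r : ℕ | Circled (m+2) (r, 1)} = {1} := by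
    ext r
    constructor
    · rintro ⟨_, _, _, _, h | ⟨_, h2, _⟩⟩
      · exact h
      · omega
    · rintro rfl
      exact ⟨le_refl 1, by omega, le_refl 1, by omega, Or.inl rfl⟩
  rw [colCount, h, Set.ncard_singleton]

lemma row_rec (m r : ℕ) (h2 : 2 ≤ r) (hr : r ≤ m+2) :
    rowCount (m+2) r = colCount (m+1) (r-1) := by
  have himg : {c : ℕ | Circled (m+2) (r, c)}
      = (fun j => m+3-j) '' {r' : ℕ | Circled (m+1) (r', r-1)} := by
    ext c
    simp only [Set.mem_setOf_eq, Set.mem_image]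
    constructor
    · rintro ⟨_, _, hc1, hc2, h | ⟨_, hcc, h⟩⟩
      · omega
      · exact ⟨m+2-c+1, h, by omega⟩
    · rintro ⟨j, hj, rfl⟩
      have hb := circled_bounds hj
      refine ⟨by omega, by omega, by omega, by omega, Or.inr ⟨h2, by omega, ?_⟩⟩
      have he : m+2-(m+3-j)+1 = j := by omega
      rw [he]
      exact hj
  rw [rowCount, colCount, himg]
  apply Set.ncard_image_of_injOn
  intro a ha b hb hab
  have ha' := circled_bounds ha
  have hb' := circled_bounds hb
  simp only at hab
  omega

lemma col_rec (m c : ℕ) (h2 : 2 ≤ c) (hc : c ≤ m+2) :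
    colCount (m+2) c = 1 + rowCount (m+1) (m+3-c) := by
  have himg : {r : ℕ | Circled (m+2) (r, c)}
      = insert 1 ((fun s => s+1) '' {c' : ℕ | Circled (m+1) (m+3-c, c')}) := by
    ext r
    simp only [Set.mem_setOf_eq, Set.mem_insert_iff, Set.mem_image]
    constructor
    · rintro ⟨_, hr2, _, _, h | ⟨hrr, _, h⟩⟩
      · exact Or.inl h
      · refine Or.inr ⟨r-1, ?_, by omega⟩
        have he : m+3-c = m+2-c+1 := by omega
        rw [he]
        exact h
    · rintro (rfl | ⟨s, hs, rfl⟩)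
      · exact ⟨le_refl 1, by omega, by omega, by omega, Or.inl rfl⟩
      · have hb := circled_bounds hs
        refine ⟨by omega, by omega, by omega, by omega,
          Or.inr ⟨by omega, h2, ?_⟩⟩
        have h1 : m+2-c+1 = m+3-c := by omega
        have h3 : s+1-1 = s := by omega
        rw [h1, h3]
        exact hs
  have hnm : (1 : ℕ) ∉ (fun s => s+1) '' {c' : ℕ | Circled (m+1) (m+3-c, c')} := by
    rintro ⟨s, hs, habs⟩
    have := circled_bounds hs
    simp only at habs
    omega
  have hfin : ((fun s => s+1) '' {c' : ℕ | Circled (m+1) (m+3-c, c')}).Finite :=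
    (circled_row_finite (m+1) (m+3-c)).image _
  have hinj : Set.InjOn (fun s => s+1) {c' : ℕ | Circled (m+1) (m+3-c, c')} := by
    intro a _ b _ hab
    simpa using hab
  rw [colCount, rowCount, himg, Set.ncard_insert_of_notMem hnm hfin,
    Set.ncard_image_of_injOn hinj]
  omega

lemma key : ∀ n : ℕ, 1 ≤ n →
    Set.BijOn (colCount n) (Set.Icc 1 n) (Set.Icc 1 n) ∧
    Set.BijOn (rowCount n) (Set.Icc 1 n) (Set.Icc 1 n) := by
  intro n hn
  induction n, hn using Nat.le_induction with
  | base =>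
      have h1 : colCount 1 1 = 1 := by
        rw [colCount, show {r : ℕ | Circled 1 (r, 1)} = {1} by
          ext r; simp [Circled, Prod.ext_iff], Set.ncard_singleton]
      have h2 : rowCount 1 1 = 1 := by
        rw [rowCount, show {c : ℕ | Circled 1 (1, c)} = {1} by
          ext c; simp [Circled, Prod.ext_iff], Set.ncard_singleton]
      rw [show Set.Icc 1 1 = ({1} : Set ℕ) by simp]
      exact ⟨by rw [Set.bijOn_singleton]; exact h1, by rw [Set.bijOn_singleton]; exact h2⟩
  | succ n hn ih =>
      obtain ⟨m, rfl⟩ : ∃ m, n = m + 1 := ⟨n - 1, by omega⟩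
      obtain ⟨⟨cmap, cinj, csurj⟩, ⟨rmap, rinj, rsurj⟩⟩ := ih
      constructor
      · refine ⟨?_, ?_, ?_⟩
        · intro c hc
          simp only [Set.mem_Icc] at hc ⊢
          rcases eq_or_lt_of_le hc.1 with h | h
          · rw [← h, col_first]; omega
          · rw [col_rec m c h hc.2]
            have hmem := rmap (show m+3-c ∈ Set.Icc 1 (m+1) by
              simp only [Set.mem_Icc]; omega)
            simp only [Set.mem_Icc] at hmem
            omega
        · intro c1 hc1 c2 hc2 heq
          simp only [Set.mem_Icc] at hc1 hc2
          rcases eq_or_lt_of_le hc1.1 with h1 | h1 <;>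
            rcases eq_or_lt_of_le hc2.1 with h2 | h2
          · omega
          · exfalso
            rw [← h1, col_first, col_rec m c2 h2 hc2.2] at heq
            have hmem := rmap (show m+3-c2 ∈ Set.Icc 1 (m+1) by
              simp only [Set.mem_Icc]; omega)
            simp only [Set.mem_Icc] at hmem
            omega
          · exfalso
            rw [← h2, col_first, col_rec m c1 h1 hc1.2] at heq
            have hmem := rmap (show m+3-c1 ∈ Set.Icc 1 (m+1) by
              simp only [Set.mem_Icc]; omega)
            simp only [Set.mem_Icc] at hmem
            omega
          · rw [col_rec m c1 h1 hc1.2, col_rec m c2 h2 hc2.2] at heq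
            have := rinj (show m+3-c1 ∈ Set.Icc 1 (m+1) by
                simp only [Set.mem_Icc]; omega)
              (show m+3-c2 ∈ Set.Icc 1 (m+1) by
                simp only [Set.mem_Icc]; omega) (by omega)
            omega
        · intro y hy
          simp only [Set.mem_Icc] at hy
          rcases eq_or_lt_of_le hy.1 with h | h
          · refine ⟨1, by simp only [Set.mem_Icc]; omega, ?_⟩
            rw [col_first]; omega
          · obtain ⟨j, hj, hjv⟩ := rsurj (show y-1 ∈ Set.Icc 1 (m+1) by
              simp only [Set.mem_Icc]; omega)
            simp only [Set.mem_Icc] at hj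
            refine ⟨m+3-j, by simp only [Set.mem_Icc]; omega, ?_⟩
            rw [col_rec m (m+3-j) (by omega) (by omega)]
            have he : m+3-(m+3-j) = j := by omega
            rw [he]
            omega
      · refine ⟨?_, ?_, ?_⟩
        · intro r hr
          simp only [Set.mem_Icc] at hr ⊢
          rcases eq_or_lt_of_le hr.1 with h | h
          · rw [← h, row_first]; omega
          · rw [row_rec m r h hr.2]
            have hmem := cmap (show r-1 ∈ Set.Icc 1 (m+1) by
              simp only [Set.mem_Icc]; omega)
            simp only [Set.mem_Icc] at hmem
            omega
        · intro r1 hr1 r2 hr2 heq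
          simp only [Set.mem_Icc] at hr1 hr2
          rcases eq_or_lt_of_le hr1.1 with h1 | h1 <;>
            rcases eq_or_lt_of_le hr2.1 with h2 | h2
          · omega
          · exfalso
            rw [← h1, row_first, row_rec m r2 h2 hr2.2] at heq
            have hmem := cmap (show r2-1 ∈ Set.Icc 1 (m+1) by
              simp only [Set.mem_Icc]; omega)
            simp only [Set.mem_Icc] at hmem
            omega
          · exfalso
            rw [← h2, row_first, row_rec m r1 h1 hr1.2] at heq
            have hmem := cmap (show r1-1 ∈ Set.Icc 1 (m+1) by
              simp only [Set.mem_Icc]; omega)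
            simp only [Set.mem_Icc] at hmem
            omega
          · rw [row_rec m r1 h1 hr1.2, row_rec m r2 h2 hr2.2] at heq
            have := cinj (show r1-1 ∈ Set.Icc 1 (m+1) by
                simp only [Set.mem_Icc]; omega)
              (show r2-1 ∈ Set.Icc 1 (m+1) by
                simp only [Set.mem_Icc]; omega) heq
            omega
        · intro y hy
          simp only [Set.mem_Icc] at hy
          rcases eq_or_lt_of_le hy.2 with h | h
          · refine ⟨1, by simp only [Set.mem_Icc]; omega, ?_⟩
            rw [row_first]; omega
          · obtain ⟨j, hj, hjv⟩ := csurj (show y ∈ Set.Icc 1 (m+1) by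
              simp only [Set.mem_Icc]; omega)
            simp only [Set.mem_Icc] at hj
            refine ⟨j+1, by simp only [Set.mem_Icc]; omega, ?_⟩
            rw [row_rec m (j+1) (by omega) (by omega)]
            simpa using hjv

/-- The column counts of circled cells give a bijection of `{1, …, n}` onto itself,
and likewise for the row counts.  In particular distinct columns (and distinct rows)
contain distinct numbers of circled cells. -/
theorem circled_counts_bijective (n : ℕ) (hn : 1 ≤ n) :
    Set.BijOn (fun i => Set.ncard {r : ℕ | Circled n (r, i)})
      (Set.Icc 1 n) (Set.Icc 1 n) ∧
    Set.BijOn (fun i => Set.ncard {c : ℕ | Circled n (i, c)})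
      (Set.Icc 1 n) (Set.Icc 1 n) := by
  exact key n hn
end

section
/- Let n ≥ 2, let f be a solution of the n×n Pulsar puzzle, and let g be a solution of the (n−1)×(n−1) Pulsar puzzle. Then the circled entries of f below the top row are determined by g: for every cell (r,c) ∈ C_n with 2 ≤ r ≤ n (so necessarily 2 ≤ c ≤ n), one has f(r,c) = g(n−c+1, r−1) + 1. -/
def Adm (n : ℕ) (h : ℕ × ℕ → ℕ) : Prop :=
  (∀ p, Circled n p → 1 ≤ h p ∧ h p ≤ n) ∧
  (∀ p q, Circled n p → Circled n q → p.1 = q.1 → p ≠ q → h p ≠ h q) ∧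
  (∀ p q, Circled n p → Circled n q → p.2 = q.2 → p ≠ q → h p ≠ h q) ∧
  (∀ v, 1 ≤ v → v ≤ n → Set.ncard {p : ℕ × ℕ | Circled n p ∧ h p = v} = v)

def shrink (m : ℕ) (h : ℕ × ℕ → ℕ) : ℕ × ℕ → ℕ := fun p => h (p.2 + 1, m + 3 - p.1) - 1
def emap (m : ℕ) : ℕ × ℕ → ℕ × ℕ := fun p => (p.2 + 1, m + 3 - p.1)

lemma circled_zero (p : ℕ × ℕ) : ¬ Circled 0 p := by simp [Circled]

lemma circled_bounds_s10 {n : ℕ} {p : ℕ × ℕ} (h : Circled n p) :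
    1 ≤ p.1 ∧ p.1 ≤ n ∧ 1 ≤ p.2 ∧ p.2 ≤ n := by
  match n, p with
  | 0, p => exact absurd h (by simp [Circled])
  | 1, p => rw [show (Circled 1 p) = (p = (1,1)) from rfl] at h; subst h; simp
  | (m+2), (r, c) =>
    obtain ⟨h1, h2, h3, h4, _⟩ := h
    exact ⟨h1, h2, h3, h4⟩

lemma circled_row_one {n c : ℕ} (hn : 1 ≤ n) : Circled n (1, c) ↔ 1 ≤ c ∧ c ≤ n := by
  match n with
  | 1 =>
    rw [show (Circled 1 (1,c)) = ((1,c) = ((1:ℕ),(1:ℕ))) from rfl]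
    constructor
    · rintro h; simp at h; omega
    · rintro ⟨h1, h2⟩; simp; omega
  | (m+2) =>
    constructor
    · rintro ⟨-, -, h3, h4, -⟩; exact ⟨h3, h4⟩
    · rintro ⟨h1, h2⟩; exact ⟨le_refl 1, by omega, h1, h2, Or.inl rfl⟩

-- the rotation map: p in C (m+1) ↦ (p.2+1, m+3-p.1) in C (m+2), below row 1
lemma circled_up {m : ℕ} {p : ℕ × ℕ} (h : Circled (m+1) p) :
    Circled (m+2) (p.2 + 1, m + 3 - p.1) := by
  obtain ⟨h1, h2, h3, h4⟩ := circled_bounds_s10 h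
  refine ⟨by omega, by omega, by omega, by omega, Or.inr ⟨by omega, by omega, ?_⟩⟩
  have e1 : m + 2 - (m + 3 - p.1) + 1 = p.1 := by omega
  have e2 : p.2 + 1 - 1 = p.2 := by omega
  rw [e1, e2]
  exact h

lemma circled_down {m r c : ℕ} (h : Circled (m+2) (r, c)) (hr : 2 ≤ r) :
    Circled (m+1) (m + 2 - c + 1, r - 1) ∧ 2 ≤ c := by
  obtain ⟨h1, h2, h3, h4, h5⟩ := h
  rcases h5 with h5 | ⟨_, hc, h5⟩
  · omega
  · exact ⟨h5, hc⟩

-- round trip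
lemma circled_up_down {m r c : ℕ} (h : Circled (m+2) (r, c)) (hr : 2 ≤ r) :
    ((m + 2 - c + 1 : ℕ), (r - 1 : ℕ)).2 + 1 = r ∧ m + 3 - ((m + 2 - c + 1 : ℕ)) = c := by
  have hc2 := (circled_down h hr).2
  obtain ⟨h1, h2, h3, h4, -⟩ := h
  constructor <;> omega

lemma circled_finite {n : ℕ} (P : ℕ × ℕ → Prop) : {p : ℕ × ℕ | Circled n p ∧ P p}.Finite := by
  apply (Set.finite_Icc (1,1) (n,n)).subset
  rintro ⟨r, c⟩ ⟨hc, -⟩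
  obtain ⟨h1, h2, h3, h4⟩ := circled_bounds_s10 hc
  exact ⟨⟨h1, h3⟩, ⟨h2, h4⟩⟩

open Finset in
/-- each value appears exactly once on row 1 -/
lemma row_one_exists {n : ℕ} (hn : 1 ≤ n) {h : ℕ × ℕ → ℕ}
    (hb : ∀ p, Circled n p → 1 ≤ h p ∧ h p ≤ n)
    (hrow : ∀ p q, Circled n p → Circled n q → p.1 = q.1 → p ≠ q → h p ≠ h q)
    {v : ℕ} (hv1 : 1 ≤ v) (hv2 : v ≤ n) :
    ∃ c, 1 ≤ c ∧ c ≤ n ∧ h (1, c) = v ∧ ∀ c', 1 ≤ c' → c' ≤ n → h (1, c') = v → c' = c := by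
  have hinj : Set.InjOn (fun c => h (1, c)) (Finset.Icc 1 n) := by
    intro a ha' b hb' hab
    by_contra hne
    simp only [coe_Icc, Set.mem_Icc] at ha' hb'
    exact hrow (1, a) (1, b) ((circled_row_one hn).2 ha') ((circled_row_one hn).2 hb')
      rfl (by simp [hne]) hab
  have himg : (Finset.Icc 1 n).image (fun c => h (1, c)) = Finset.Icc 1 n := by
    apply Finset.eq_of_subset_of_card_le
    · intro w hw
      simp only [Finset.mem_image, Finset.mem_Icc] at hw ⊢
      obtain ⟨c, hc, rfl⟩ := hw
      exact hb (1, c) ((circled_row_one hn).2 hc)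
    · rw [Finset.card_image_of_injOn hinj]
  have hv : v ∈ (Finset.Icc 1 n).image (fun c => h (1, c)) := by
    rw [himg]; exact Finset.mem_Icc.2 ⟨hv1, hv2⟩
  simp only [Finset.mem_image, Finset.mem_Icc] at hv
  obtain ⟨c, ⟨hc1, hc2⟩, hcv⟩ := hv
  refine ⟨c, hc1, hc2, hcv, fun c' h1 h2 h3 => ?_⟩
  exact hinj (by simp [Finset.mem_Icc]; omega) (by simp [Finset.mem_Icc]; omega) (by simp [h3, hcv])

/-- below row 1, values are at least 2 -/
lemma adm_row_one {n : ℕ} (hn : 1 ≤ n) {h : ℕ × ℕ → ℕ} (ha : Adm n h)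
    {v : ℕ} (hv1 : 1 ≤ v) (hv2 : v ≤ n) :
    ∃ c, 1 ≤ c ∧ c ≤ n ∧ h (1, c) = v ∧ ∀ c', 1 ≤ c' → c' ≤ n → h (1, c') = v → c' = c :=
  row_one_exists hn ha.1 ha.2.1 hv1 hv2

lemma adm_two_le {n : ℕ} (hn : 1 ≤ n) {h : ℕ × ℕ → ℕ} (ha : Adm n h)
    {p : ℕ × ℕ} (hp : Circled n p) (hr : 2 ≤ p.1) : 2 ≤ h p := by
  obtain ⟨h1, h2⟩ := ha.1 p hp
  rcases Nat.lt_or_ge (h p) 2 with hlt | hge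
  · exfalso
    have hv : h p = 1 := by omega
    obtain ⟨c, hc1, hc2, hcv, -⟩ := adm_row_one hn ha le_rfl hn
    have hcard := ha.2.2.2 1 le_rfl hn
    have hmem1 : (1, c) ∈ {q : ℕ × ℕ | Circled n q ∧ h q = 1} :=
      ⟨(circled_row_one hn).2 ⟨hc1, hc2⟩, hcv⟩
    have hmem2 : p ∈ {q : ℕ × ℕ | Circled n q ∧ h q = 1} := ⟨hp, hv⟩
    have hne : (1, c) ≠ p := by intro he; rw [← he] at hr; exact absurd hr (by norm_num)
    have : 1 < Set.ncard {q : ℕ × ℕ | Circled n q ∧ h q = 1} := by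
      rw [Set.one_lt_ncard_iff (circled_finite _)]
      exact ⟨(1,c), p, hmem1, hmem2, hne⟩
    omega
  · exact hge

/-- count of value v strictly below row 1 -/
lemma adm_count_below {n : ℕ} (hn : 1 ≤ n) {h : ℕ × ℕ → ℕ} (ha : Adm n h)
    {v : ℕ} (hv1 : 1 ≤ v) (hv2 : v ≤ n) :
    Set.ncard {p : ℕ × ℕ | Circled n p ∧ 2 ≤ p.1 ∧ h p = v} = v - 1 := by
  obtain ⟨c, hc1, hc2, hcv, hcu⟩ := adm_row_one hn ha hv1 hv2
  have hsplit : {p : ℕ × ℕ | Circled n p ∧ h p = v}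
      = insert (1, c) {p : ℕ × ℕ | Circled n p ∧ 2 ≤ p.1 ∧ h p = v} := by
    ext p
    simp only [Set.mem_setOf_eq, Set.mem_insert_iff]
    constructor
    · rintro ⟨hp, hpv⟩
      rcases Nat.lt_or_ge p.1 2 with hlt | hge
      · left
        have hb := circled_bounds_s10 hp
        have hp1 : p.1 = 1 := by omega
        have hp2 : p.2 = c := by
          apply hcu p.2 hb.2.2.1 hb.2.2.2
          rw [show ((1:ℕ), p.2) = p from by rw [← hp1]]
          exact hpv
        rw [← hp1, ← hp2]
      · exact Or.inr ⟨hp, hge, hpv⟩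
    · rintro (rfl | ⟨hp, -, hpv⟩)
      · exact ⟨(circled_row_one hn).2 ⟨hc1, hc2⟩, hcv⟩
      · exact ⟨hp, hpv⟩
  have hnotmem : (1, c) ∉ {p : ℕ × ℕ | Circled n p ∧ 2 ≤ p.1 ∧ h p = v} := by
    rintro ⟨-, hge, -⟩; exact absurd hge (by norm_num)
  have hfin : {p : ℕ × ℕ | Circled n p ∧ 2 ≤ p.1 ∧ h p = v}.Finite := by
    exact circled_finite _
  have hcard := ha.2.2.2 v hv1 hv2
  rw [hsplit, Set.ncard_insert_of_notMem hnotmem hfin] at hcard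
  omega

lemma emap_inj {m : ℕ} {p q : ℕ × ℕ} (hp : Circled (m+1) p) (hq : Circled (m+1) q)
    (he : emap m p = emap m q) : p = q := by
  have hbp := circled_bounds_s10 hp
  have hbq := circled_bounds_s10 hq
  simp only [emap, Prod.mk.injEq] at he
  have : p.1 = q.1 := by omega
  have : p.2 = q.2 := by omega
  exact Prod.ext ‹p.1 = q.1› this

lemma emap_circled {m : ℕ} {p : ℕ × ℕ} (hp : Circled (m+1) p) :
    Circled (m+2) (emap m p) ∧ 2 ≤ (emap m p).1 := by
  have hb := circled_bounds_s10 hp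
  exact ⟨circled_up hp, by simp [emap]; omega⟩

lemma emap_surj {m : ℕ} {q : ℕ × ℕ} (hq : Circled (m+2) q) (hr : 2 ≤ q.1) :
    ∃ p, Circled (m+1) p ∧ emap m p = q := by
  obtain ⟨r, c⟩ := q
  simp only at hr
  obtain ⟨hp, hc2⟩ := circled_down hq hr
  have hb := circled_bounds_s10 hq
  simp only at hb
  refine ⟨(m + 2 - c + 1, r - 1), hp, ?_⟩
  simp only [emap, Prod.mk.injEq]
  omega

lemma shrink_eq {m : ℕ} {h : ℕ × ℕ → ℕ} (p : ℕ × ℕ) : shrink m h p = h (emap m p) - 1 := rfl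

lemma shrink_adm {m : ℕ} {h : ℕ × ℕ → ℕ} (ha : Adm (m+2) h) : Adm (m+1) (shrink m h) := by
  have hval : ∀ p, Circled (m+1) p → 2 ≤ h (emap m p) ∧ h (emap m p) ≤ m + 2 := by
    intro p hp
    obtain ⟨hc, hr⟩ := emap_circled hp
    exact ⟨adm_two_le (by omega) ha hc hr, (ha.1 _ hc).2⟩
  refine ⟨?_, ?_, ?_, ?_⟩
  · intro p hp
    have := hval p hp
    rw [shrink_eq]
    omega
  · -- rows of C (m+1) map to columns of C (m+2)
    intro p q hp hq hpq hne
    have he : (emap m p).2 = (emap m q).2 := by simp [emap, hpq]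
    have hne' : emap m p ≠ emap m q := fun hc => hne (emap_inj hp hq hc)
    have := ha.2.2.1 _ _ (emap_circled hp).1 (emap_circled hq).1 he hne'
    rw [shrink_eq, shrink_eq]
    have h1 := hval p hp
    have h2 := hval q hq
    omega
  · intro p q hp hq hpq hne
    have he : (emap m p).1 = (emap m q).1 := by simp [emap, hpq]
    have hne' : emap m p ≠ emap m q := fun hc => hne (emap_inj hp hq hc)
    have := ha.2.1 _ _ (emap_circled hp).1 (emap_circled hq).1 he hne'
    rw [shrink_eq, shrink_eq]
    have h1 := hval p hp
    have h2 := hval q hq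
    omega
  · intro v hv1 hv2
    have himg : emap m '' {p : ℕ × ℕ | Circled (m+1) p ∧ shrink m h p = v}
        = {q : ℕ × ℕ | Circled (m+2) q ∧ 2 ≤ q.1 ∧ h q = v + 1} := by
      ext q
      simp only [Set.mem_image, Set.mem_setOf_eq]
      constructor
      · rintro ⟨p, ⟨hp, hpv⟩, rfl⟩
        have := hval p hp
        rw [shrink_eq] at hpv
        exact ⟨(emap_circled hp).1, (emap_circled hp).2, by omega⟩
      · rintro ⟨hq, hr, hqv⟩
        obtain ⟨p, hp, rfl⟩ := emap_surj hq hr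
        have := hval p hp
        exact ⟨p, ⟨hp, by rw [shrink_eq]; omega⟩, rfl⟩
    have hinj : Set.InjOn (emap m) {p : ℕ × ℕ | Circled (m+1) p ∧ shrink m h p = v} :=
      fun p hp q hq he => emap_inj hp.1 hq.1 he
    have := Set.ncard_image_of_injOn hinj
    rw [himg] at this
    rw [← this, adm_count_below (by omega) ha (by omega : 1 ≤ v + 1) (by omega : v + 1 ≤ m + 2)]
    omega

def RowClosed (n : ℕ) (h : ℕ × ℕ → ℕ) : Prop :=
  ∀ p, Circled n p → ∀ w, h p ≤ w → w ≤ n → ∃ q, Circled n q ∧ q.1 = p.1 ∧ h q = w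

def ColClosed (n : ℕ) (h : ℕ × ℕ → ℕ) : Prop :=
  ∀ p, Circled n p → ∀ w, h p ≤ w → w ≤ n → ∃ q, Circled n q ∧ q.2 = p.2 ∧ h q = w

/-- transport of column-closure from level `m+1` row-closure, below row 1 -/
lemma below_transport_col {m : ℕ} {h : ℕ × ℕ → ℕ} (ha : Adm (m+2) h)
    (hRC : RowClosed (m+1) (shrink m h)) {p : ℕ × ℕ} (hp : Circled (m+2) p) (hp1 : 2 ≤ p.1)
    {w : ℕ} (hw1 : h p ≤ w) (hw2 : w ≤ m + 2) :
    ∃ q, Circled (m+2) q ∧ 2 ≤ q.1 ∧ q.2 = p.2 ∧ h q = w := by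
  obtain ⟨p', hp', rfl⟩ := emap_surj hp hp1
  have hval : 2 ≤ h (emap m p') := adm_two_le (by omega) ha hp hp1
  have hs : shrink m h p' = h (emap m p') - 1 := rfl
  obtain ⟨q', hq', hq'1, hq'v⟩ := hRC p' hp' (w - 1) (by omega) (by omega)
  refine ⟨emap m q', (emap_circled hq').1, (emap_circled hq').2, ?_, ?_⟩
  · have hb1 := circled_bounds_s10 hp'
    have hb2 := circled_bounds_s10 hq'
    simp only [emap]
    omega
  · have hval2 : 2 ≤ h (emap m q') := adm_two_le (by omega) ha (emap_circled hq').1 (emap_circled hq').2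
    rw [shrink_eq] at hq'v
    omega

lemma below_transport_row {m : ℕ} {h : ℕ × ℕ → ℕ} (ha : Adm (m+2) h)
    (hCC : ColClosed (m+1) (shrink m h)) {p : ℕ × ℕ} (hp : Circled (m+2) p) (hp1 : 2 ≤ p.1)
    {w : ℕ} (hw1 : h p ≤ w) (hw2 : w ≤ m + 2) :
    ∃ q, Circled (m+2) q ∧ 2 ≤ q.1 ∧ q.1 = p.1 ∧ h q = w := by
  obtain ⟨p', hp', rfl⟩ := emap_surj hp hp1
  have hval : 2 ≤ h (emap m p') := adm_two_le (by omega) ha hp hp1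
  have hs : shrink m h p' = h (emap m p') - 1 := rfl
  obtain ⟨q', hq', hq'1, hq'v⟩ := hCC p' hp' (w - 1) (by omega) (by omega)
  refine ⟨emap m q', (emap_circled hq').1, (emap_circled hq').2, ?_, ?_⟩
  · simp only [emap]
    omega
  · have hval2 : 2 ≤ h (emap m q') := adm_two_le (by omega) ha (emap_circled hq').1 (emap_circled hq').2
    rw [shrink_eq] at hq'v
    omega

/-- row-1 rigidity: value `v` is missing below row 1 in column `c` iff `v ≤ h (1,c)`. -/
lemma rigidity {m : ℕ} {h : ℕ × ℕ → ℕ} (ha : Adm (m+2) h)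
    (hRC : RowClosed (m+1) (shrink m h)) {v c : ℕ} (hv1 : 2 ≤ v) (hv2 : v ≤ m + 2)
    (hc1 : 1 ≤ c) (hc2 : c ≤ m + 2) :
    v ≤ h (1, c) ↔ ∀ q, Circled (m+2) q → 2 ≤ q.1 → q.2 = c → h q ≠ v := by
  set n := m + 2 with hn
  set Z : Set ℕ := {c | 1 ≤ c ∧ c ≤ n ∧ v ≤ h (1, c)} with hZ
  set U : Set ℕ := {c | 1 ≤ c ∧ c ≤ n ∧ ∃ q, Circled n q ∧ 2 ≤ q.1 ∧ q.2 = c ∧ h q = v} with hU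
  set V : Set ℕ := {c | 1 ≤ c ∧ c ≤ n ∧ ∀ q, Circled n q → 2 ≤ q.1 → q.2 = c → h q ≠ v} with hV
  have hone : (1:ℕ) ≤ n := by omega
  -- card of Z
  have hZcard : Z.ncard = n + 1 - v := by
    have himg : (fun c => h (1, c)) '' Z = Set.Icc v n := by
      ext w
      simp only [Set.mem_image, Set.mem_Icc, hZ, Set.mem_setOf_eq]
      constructor
      · rintro ⟨c', ⟨h1, h2, h3⟩, rfl⟩
        exact ⟨h3, (ha.1 (1, c') ((circled_row_one hone).2 ⟨h1, h2⟩)).2⟩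
      · rintro ⟨hw1, hw2⟩
        obtain ⟨c', h1, h2, h3, -⟩ := adm_row_one hone ha (by omega : 1 ≤ w) hw2
        exact ⟨c', ⟨h1, h2, by omega⟩, h3⟩
    have hinj : Set.InjOn (fun c => h (1, c)) Z := by
      rintro a ⟨ha1, ha2, -⟩ b ⟨hb1, hb2, -⟩ hab
      by_contra hne
      exact ha.2.1 (1, a) (1, b) ((circled_row_one hone).2 ⟨ha1, ha2⟩)
        ((circled_row_one hone).2 ⟨hb1, hb2⟩) rfl (by simp [hne]) hab
    rw [← Set.ncard_image_of_injOn hinj, himg, ← Finset.coe_Icc, Set.ncard_coe_finset,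
      Nat.card_Icc]
  -- card of U
  have hUcard : U.ncard = v - 1 := by
    have himg : Prod.snd '' {q : ℕ × ℕ | Circled n q ∧ 2 ≤ q.1 ∧ h q = v} = U := by
      ext c'
      simp only [Set.mem_image, Set.mem_setOf_eq, hU]
      constructor
      · rintro ⟨q, ⟨hq, hq1, hqv⟩, rfl⟩
        have hb := circled_bounds_s10 hq
        exact ⟨hb.2.2.1, hb.2.2.2, q, hq, hq1, rfl, hqv⟩
      · rintro ⟨-, -, q, hq, hq1, rfl, hqv⟩
        exact ⟨q, ⟨hq, hq1, hqv⟩, rfl⟩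
    have hinj : Set.InjOn Prod.snd {q : ℕ × ℕ | Circled n q ∧ 2 ≤ q.1 ∧ h q = v} := by
      rintro a ⟨ha', -, hav⟩ b ⟨hb', -, hbv⟩ hab
      by_contra hne
      exact ha.2.2.1 a b ha' hb' hab hne (by rw [hav, hbv])
    rw [← himg, Set.ncard_image_of_injOn hinj, adm_count_below hone ha (by omega) hv2]
  -- V = Icc \ U
  have hVU : V = Set.Icc 1 n \ U := by
    ext c'
    simp only [hV, hU, Set.mem_setOf_eq, Set.mem_diff, Set.mem_Icc]
    constructor
    · rintro ⟨h1, h2, h3⟩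
      refine ⟨⟨h1, h2⟩, ?_⟩
      rintro ⟨-, -, q, hq, hq1, hq2, hqv⟩
      exact h3 q hq hq1 hq2 hqv
    · rintro ⟨⟨h1, h2⟩, h3⟩
      refine ⟨h1, h2, fun q hq hq1 hq2 hqv => h3 ⟨h1, h2, q, hq, hq1, hq2, hqv⟩⟩
  have hUsub : U ⊆ Set.Icc 1 n := by rintro c' ⟨h1, h2, -⟩; exact ⟨h1, h2⟩
  have hVcard : V.ncard = n + 1 - v := by
    rw [hVU, Set.ncard_diff hUsub ((Set.finite_Icc 1 n).subset hUsub), hUcard, ← Finset.coe_Icc,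
      Set.ncard_coe_finset, Nat.card_Icc]
    omega
  -- Z ⊆ V
  have hZV : Z ⊆ V := by
    rintro c' ⟨h1, h2, h3⟩
    refine ⟨h1, h2, fun q hq hq1 hq2 hqv => ?_⟩
    obtain ⟨q2, hq2c, hq21, hq2col, hq2v⟩ :=
      below_transport_col ha hRC hq hq1 (le_trans (le_of_eq hqv) h3)
        ((ha.1 (1, c') ((circled_row_one hone).2 ⟨h1, h2⟩)).2)
    have : h (1, c') ≠ h q2 := by
      apply ha.2.2.1 (1, c') q2 ((circled_row_one hone).2 ⟨h1, h2⟩) hq2c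
      · rw [hq2col, hq2]
      · intro he; rw [← he] at hq21; exact absurd hq21 (by norm_num)
    rw [hq2v] at this
    exact this rfl
  have hZeqV : Z = V :=
    Set.eq_of_subset_of_ncard_le hZV (by rw [hZcard, hVcard])
      ((Set.finite_Icc 1 n).subset (by rintro c' ⟨e1, e2, -⟩; exact ⟨e1, e2⟩))
  constructor
  · intro hle q hq hq1 hq2
    have : c ∈ Z := ⟨hc1, hc2, hle⟩
    rw [hZeqV] at this
    exact this.2.2 q hq hq1 hq2
  · intro hall
    have : c ∈ V := ⟨hc1, hc2, hall⟩
    rw [← hZeqV] at this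
    exact this.2.2

theorem adm_closed : ∀ n (h : ℕ × ℕ → ℕ), Adm n h → RowClosed n h ∧ ColClosed n h := by
  intro n
  induction n with
  | zero =>
    intro h _
    constructor <;> (intro p hp; exact absurd hp (circled_zero p))
  | succ k ih =>
    cases k with
    | zero =>
      intro h ha
      constructor <;>
      · intro p hp w hw1 hw2
        have hb := ha.1 p hp
        have hw : w = h p := by omega
        exact ⟨p, hp, rfl, hw.symm⟩
    | succ m =>
      intro h ha
      have ha' := shrink_adm ha
      obtain ⟨hRC', hCC'⟩ := ih (shrink m h) ha'
      constructor
      · intro p hp w hw1 hw2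
        rcases Nat.lt_or_ge p.1 2 with h1 | h1
        · have hb := circled_bounds_s10 hp
          have hp1 : p.1 = 1 := by omega
          obtain ⟨c, hc1, hc2, hcv, -⟩ := adm_row_one (by omega) ha
            (show 1 ≤ w by have := ha.1 p hp; omega) hw2
          exact ⟨(1, c), (circled_row_one (by omega)).2 ⟨hc1, hc2⟩, by simp [hp1], hcv⟩
        · obtain ⟨q, hq, -, hqr, hqv⟩ := below_transport_row ha hCC' hp h1 hw1 hw2
          exact ⟨q, hq, hqr, hqv⟩
      · intro p hp w hw1 hw2
        rcases eq_or_lt_of_le hw1 with he | hlt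
        · exact ⟨p, hp, rfl, he⟩
        rcases Nat.lt_or_ge p.1 2 with h1 | h1
        · have hb := circled_bounds_s10 hp
          have hp1 : p.1 = 1 := by omega
          have hpe : p = (1, p.2) := by rw [← hp1]
          have hw2' : 2 ≤ w := by have := ha.1 p hp; omega
          have hrig := rigidity ha hRC' hw2' hw2 hb.2.2.1 hb.2.2.2 (c := p.2)
          have hnot : ¬ (w ≤ h (1, p.2)) := by rw [← hpe]; omega
          rw [hrig] at hnot
          push_neg at hnot
          obtain ⟨q, hq, hq1, hq2, hqv⟩ := hnot
          exact ⟨q, hq, by rw [hq2], hqv⟩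
        · obtain ⟨q, hq, -, hqc, hqv⟩ := below_transport_col ha hRC' hp h1 hw1 hw2
          exact ⟨q, hq, hqc, hqv⟩

theorem adm_unique : ∀ n (h1 h2 : ℕ × ℕ → ℕ), Adm n h1 → Adm n h2 →
    ∀ p, Circled n p → h1 p = h2 p := by
  intro n
  induction n with
  | zero => intro h1 h2 _ _ p hp; exact absurd hp (circled_zero p)
  | succ k ih =>
    cases k with
    | zero =>
      intro h1 h2 ha1 ha2 p hp
      have b1 := ha1.1 p hp
      have b2 := ha2.1 p hp
      omega
    | succ m =>
      intro h1 h2 ha1 ha2 p hp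
      have ha1' := shrink_adm ha1
      have ha2' := shrink_adm ha2
      have hbelow : ∀ q, Circled (m+2) q → 2 ≤ q.1 → h1 q = h2 q := by
        intro q hq hq1
        obtain ⟨p', hp', rfl⟩ := emap_surj hq hq1
        have heq := ih (shrink m h1) (shrink m h2) ha1' ha2' p' hp'
        rw [shrink_eq, shrink_eq] at heq
        have v1 := adm_two_le (by omega) ha1 hq hq1
        have v2 := adm_two_le (by omega) ha2 hq hq1
        omega
      rcases Nat.lt_or_ge p.1 2 with hr | hr
      · have hb := circled_bounds_s10 hp
        have hp1 : p.1 = 1 := by omega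
        have hpe : p = (1, p.2) := by rw [← hp1]
        rw [hpe]
        have hRC1 := (adm_closed (m+1) (shrink m h1) ha1').1
        have hRC2 := (adm_closed (m+1) (shrink m h2) ha2').1
        have key : ∀ v, 2 ≤ v → v ≤ m + 2 → (v ≤ h1 (1, p.2) ↔ v ≤ h2 (1, p.2)) := by
          intro v hv1 hv2
          rw [rigidity ha1 hRC1 hv1 hv2 hb.2.2.1 hb.2.2.2,
              rigidity ha2 hRC2 hv1 hv2 hb.2.2.1 hb.2.2.2]
          constructor
          · intro hall q hq hq1 hq2; rw [← hbelow q hq hq1]; exact hall q hq hq1 hq2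
          · intro hall q hq hq1 hq2; rw [hbelow q hq hq1]; exact hall q hq hq1 hq2
        have c1 := ha1.1 p hp
        have c2 := ha2.1 p hp
        rw [hpe] at c1 c2
        by_contra hne
        rcases Nat.lt_or_ge (h1 (1, p.2)) (h2 (1, p.2)) with hlt | hge
        · have := (key (h1 (1, p.2) + 1) (by omega) (by omega)).2 (by omega); omega
        · have hlt2 : h2 (1, p.2) < h1 (1, p.2) := by omega
          have := (key (h2 (1, p.2) + 1) (by omega) (by omega)).1 (by omega); omega
      · exact hbelow p hp hr

lemma pulsar_adm {n : ℕ} {f : ℕ × ℕ → ℕ} (hn : 1 ≤ n) (hf : IsPulsarSolution n f) :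
    Adm n f := by
  obtain ⟨⟨hb, hrow, hcol⟩, hcount⟩ := hf
  have hb' : ∀ p, Circled n p → 1 ≤ f p ∧ f p ≤ n := by
    intro p hp
    have hbd := circled_bounds_s10 hp
    have := hb p.1 p.2 hbd.1 hbd.2.1 hbd.2.2.1 hbd.2.2.2
    rwa [Prod.mk.eta] at this
  have hrow' : ∀ p q, Circled n p → Circled n q → p.1 = q.1 → p ≠ q → f p ≠ f q := by
    intro p q hp hq h1 hne
    have bp := circled_bounds_s10 hp
    have bq := circled_bounds_s10 hq
    have h2 : p.2 ≠ q.2 := fun he => hne (Prod.ext h1 he)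
    have := hrow p.1 p.2 q.2 bp.1 bp.2.1 bp.2.2.1 bp.2.2.2 bq.2.2.1 bq.2.2.2 h2
    rwa [Prod.mk.eta, h1, Prod.mk.eta] at this
  have hcol' : ∀ p q, Circled n p → Circled n q → p.2 = q.2 → p ≠ q → f p ≠ f q := by
    intro p q hp hq h2 hne
    have bp := circled_bounds_s10 hp
    have bq := circled_bounds_s10 hq
    have h1 : p.1 ≠ q.1 := fun he => hne (Prod.ext he h2)
    have := hcol p.1 q.1 p.2 bp.1 bp.2.1 bq.1 bq.2.1 bp.2.2.1 bp.2.2.2 h1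
    rwa [Prod.mk.eta, h2, Prod.mk.eta] at this
  refine ⟨hb', hrow', hcol', ?_⟩
  intro v hv1 hv2
  obtain ⟨c, hc1, hc2, hcv, -⟩ := row_one_exists hn hb' hrow' hv1 hv2
  have hp : Circled n (1, c) := (circled_row_one hn).2 ⟨hc1, hc2⟩
  have := hcount (1, c) hp
  rw [hcv] at this
  exact this.symm


/-- For `n ≥ 2`, the circled entries below the top row of a solution `f` of the `n × n`
Pulsar puzzle are determined by a solution `g` of the `(n-1) × (n-1)` puzzle:
`f (r, c) = g (n - c + 1, r - 1) + 1`. -/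
theorem pulsar_circled_recursion (n : ℕ) (hn : 2 ≤ n) (f g : ℕ × ℕ → ℕ)
    (hf : IsPulsarSolution n f) (hg : IsPulsarSolution (n - 1) g) :
    ∀ r c, 2 ≤ r → r ≤ n → Circled n (r, c) →
      f (r, c) = g (n - c + 1, r - 1) + 1 := by
  obtain ⟨m, rfl⟩ : ∃ m, n = m + 2 := ⟨n - 2, by omega⟩
  have haf : Adm (m + 2) f := pulsar_adm (by omega) hf
  have hg' : IsPulsarSolution (m + 1) g := by
    have : m + 2 - 1 = m + 1 := by omega
    rwa [this] at hg
  have hag : Adm (m + 1) g := pulsar_adm (by omega) hg'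
  have huniq := adm_unique (m + 1) (shrink m f) g (shrink_adm haf) hag
  intro r c hr2 hrn hcirc
  obtain ⟨hp', hc2⟩ := circled_down hcirc hr2
  have hb := circled_bounds_s10 hcirc
  simp only at hb
  have key := huniq (m + 2 - c + 1, r - 1) hp'
  have hemap : emap m (m + 2 - c + 1, r - 1) = (r, c) := by
    have e1 : r - 1 + 1 = r := by omega
    have e2 : m + 3 - (m + 2 - c + 1) = c := by omega
    simp [emap, e1, e2]
  rw [shrink_eq, hemap] at key
  have hf1 : 1 ≤ f (r, c) := (haf.1 (r, c) hcirc).1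
  omega
end
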